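/- arXiv:2207.10716 — 6 statements merged into one kernel-verified Lean document; each statement's English description precedes it below -/
import Mathlib

section
/- In the covariate shift setting, if P̃_X is absolutely continuous with respect to P_X and the model-fitting algorithm 𝒜 is symmetric, then for every α ∈ (0,1) the JAW prediction interval satisfies ℙ{Y_{n+1} ∈ Ĉ^JAW_{n,α}(X_{n+1})} = ℙ{Q⁻_α ≤ Y_{n+1} ≤ Q⁺_{1−α}} ≥ 1 − 2α, where the probability is over the joint draw of the n training points and the test point. -/
open MeasureTheory ProbabilityTheory Finset

/-- The level-`β` lower quantile of a weighted empirical distribution: values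
`v₁,…,vₙ`, weights `q₁,…,qₙ`, and extra mass `qExtra` (= `q_{n+1}`) at `-∞`:
`Q⁻_β = inf {t ∈ ℝ : q_{n+1} + ∑_{i ≤ n : vᵢ ≤ t} qᵢ ≥ β}`, the infimum taken in the
extended real line (equal to `+∞` when the defining set is empty). -/
noncomputable def weightedLowerQuantile {n : ℕ} (v q : Fin n → ℝ) (qExtra β : ℝ) : EReal :=
  sInf (Real.toEReal '' {t : ℝ | β ≤ qExtra + ∑ i ∈ univ.filter (fun i => v i ≤ t), q i})

/-- The level-`β` upper quantile of a weighted empirical distribution: values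
`v₁,…,vₙ`, weights `q₁,…,qₙ`, and extra mass `q_{n+1}` at `+∞`:
`Q⁺_β = inf {t ∈ ℝ : ∑_{i ≤ n : vᵢ ≤ t} qᵢ ≥ β}`, the infimum taken in the extended
real line (equal to `+∞` when the defining set is empty). -/
noncomputable def weightedUpperQuantile {n : ℕ} (v q : Fin n → ℝ) (β : ℝ) : EReal :=
  sInf (Real.toEReal '' {t : ℝ | β ≤ ∑ i ∈ univ.filter (fun i => v i ≤ t), q i})

/-- A model-fitting algorithm: for each sample size `m`, it maps a sequence of `m`
labeled points in `ℝ^d × ℝ` to a regression function `ℝ^d → ℝ`. -/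
def FittingAlg (d : ℕ) : Type :=
  ∀ m : ℕ, (Fin m → (Fin d → ℝ) × ℝ) → (Fin d → ℝ) → ℝ

/-- Leave-one-out model `μ̂₋ᵢ`: the algorithm applied to the `n+1` training points
with the `i`-th point removed. -/
def looModel {d n : ℕ} (𝒜 : FittingAlg d) (train : Fin (n + 1) → (Fin d → ℝ) × ℝ)
    (i : Fin (n + 1)) : (Fin d → ℝ) → ℝ :=
  𝒜 n (fun j => train (i.succAbove j))

/-- Leave-one-out residual `Rᵢ = |Yᵢ - μ̂₋ᵢ(Xᵢ)|`. -/
noncomputable def looResid {d n : ℕ} (𝒜 : FittingAlg d)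
    (train : Fin (n + 1) → (Fin d → ℝ) × ℝ) (i : Fin (n + 1)) : ℝ :=
  |(train i).2 - looModel 𝒜 train i (train i).1|

/-- Normalized likelihood-ratio weight of the `i`-th training point at the point `x`:
`pᵢ^w(x) = w(Xᵢ) / (∑ⱼ w(Xⱼ) + w(x))`. -/
noncomputable def nlrWeight {d n : ℕ} (w : (Fin d → ℝ) → ℝ)
    (train : Fin (n + 1) → (Fin d → ℝ) × ℝ) (x : Fin d → ℝ) (i : Fin (n + 1)) : ℝ :=
  w (train i).1 / (∑ j, w (train j).1 + w x)

/-- Normalized likelihood-ratio weight of the test point at `x`: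
`p_{n+2}^w(x) = w(x) / (∑ⱼ w(Xⱼ) + w(x))`. -/
noncomputable def nlrWeightTest {d n : ℕ} (w : (Fin d → ℝ) → ℝ)
    (train : Fin (n + 1) → (Fin d → ℝ) × ℝ) (x : Fin d → ℝ) : ℝ :=
  w x / (∑ j, w (train j).1 + w x)

/-- The joint law of the data: the `n+1` training points are i.i.d. with law
`P_X ⊗ₘ P_{Y|X}`, and the test point, independent of them, has law `P̃_X ⊗ₘ P_{Y|X}`. -/
noncomputable def jointLaw {d n : ℕ} (PX PtX : Measure (Fin d → ℝ))
    [SFinite PX] [SFinite PtX]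
    (K : Kernel (Fin d → ℝ) ℝ) [IsSFiniteKernel K] :
    Measure ((Fin (n + 1) → (Fin d → ℝ) × ℝ) × ((Fin d → ℝ) × ℝ)) :=
  (Measure.pi fun _ : Fin (n + 1) => PX.compProd K).prod (PtX.compProd K)

open scoped ENNReal

/-!
Append the test point to the training set. For two points `i ≠ j` of the augmented data let
`R_{ij}` be the residual of point `i` under the model fitted without `i` and `j`; point `i` beats
point `j` when `R_{ij} < R_{ji}`, and a point is strange when the points beating it carry a
`1 - α` fraction of the total likelihood-ratio weight. As beating is asymmetric, a weighted
tournament count shows that the strange points always carry at most a `2α` fraction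
of the weight. Since `R_{i,test} = Rᵢ` and `R_{test,i} = |Y - μ̂₋ᵢ(X)|`, a miscovered test point
of positive weight is strange. Finally the test point has density `w(X)` relative to a training
point, so the probability that it is strange is the expected weight of the last of `n + 2`
i.i.d. points on the event that it is strange; by exchangeability this equals the average over
all points, which is at most `2α` times the expected average weight, i.e. at most `2α`.
-/

section WeightedQuantile

variable {m : ℕ} {v q : Fin m → ℝ} {qExtra β y : ℝ}

lemma add_sum_filter_lt_of_lt_weightedLowerQuantile
    (h : (y : EReal) < weightedLowerQuantile v q qExtra β) :
    qExtra + ∑ i ∈ univ.filter (v · ≤ y), q i < β := by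
  by_contra! hy
  exact h.not_ge (sInf_le ⟨y, hy, rfl⟩)

lemma le_sum_filter_of_weightedUpperQuantile_lt (hq : ∀ i, 0 ≤ q i)
    (h : weightedUpperQuantile v q β < y) :
    β ≤ ∑ i ∈ univ.filter (v · < y), q i := by
  obtain ⟨_, ⟨t, ht, rfl⟩, hty⟩ := sInf_lt_iff.mp h
  refine ht.trans (sum_le_sum_of_subset_of_nonneg (fun i hi => ?_) fun i _ _ => hq i)
  simp only [mem_filter, mem_univ, true_and] at hi ⊢
  exact hi.trans_lt (EReal.coe_lt_coe_iff.mp hty)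

lemma le_sum_filter_of_not_mem_jaw (μ R W : Fin m → ℝ) (hW : ∀ i, 0 ≤ W i) {w₀ α : ℝ}
    (hw₀ : 0 < w₀)
    (hmiss : ¬ (weightedLowerQuantile (fun i => μ i - R i) (fun i => W i / (∑ j, W j + w₀))
        (w₀ / (∑ j, W j + w₀)) α ≤ (y : EReal) ∧
      (y : EReal) ≤ weightedUpperQuantile (fun i => μ i + R i)
        (fun i => W i / (∑ j, W j + w₀)) (1 - α))) :
    (1 - α) * (∑ j, W j + w₀) ≤ ∑ i ∈ univ.filter (fun i => R i < |y - μ i|), W i := by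
  set D := ∑ j, W j + w₀
  have hD : 0 < D := add_pos_of_nonneg_of_pos (sum_nonneg fun j _ => hW j) hw₀
  have hmono : ∀ p : Fin m → Prop, [DecidablePred p] → (∀ i, p i → R i < |y - μ i|) →
      ∑ i ∈ univ.filter p, W i ≤ ∑ i ∈ univ.filter (fun i => R i < |y - μ i|), W i :=
    fun p _ hp => sum_le_sum_of_subset_of_nonneg (monotone_filter_right _ fun i _ => hp i)
      fun i _ _ => hW i
  rcases not_and_or.mp hmiss with hlow | hup
  · have hlt := add_sum_filter_lt_of_lt_weightedLowerQuantile (not_le.mp hlow)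
    rw [← sum_div, ← add_div, div_lt_iff₀ hD] at hlt
    have hsplit := sum_filter_add_sum_filter_not univ (fun i => μ i - R i ≤ y) W
    have hfar := hmono (fun i => ¬ μ i - R i ≤ y) fun i hi => by
      linarith [neg_abs_le (y - μ i), not_le.mp hi]
    linarith
  · have hle := le_sum_filter_of_weightedUpperQuantile_lt (fun i => div_nonneg (hW i) hD.le)
      (not_le.mp hup)
    rw [← sum_div, le_div_iff₀ hD] at hle
    exact hle.trans (hmono _ fun i hi => by linarith [le_abs_self (y - μ i)])

end WeightedQuantile

section Tournament

variable {ι : Type*} (w : ι → ℝ) (beats : ι → ι → Prop) [DecidableRel beats]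

def IsStrange [Fintype ι] (α : ℝ) (k : ι) : Prop :=
  (1 - α) * ∑ i, w i ≤ ∑ i ∈ univ.filter (beats · k), w i

noncomputable instance [Fintype ι] (α : ℝ) : DecidablePred (IsStrange w beats α) :=
  fun _ => inferInstanceAs (Decidable (_ ≤ _))

variable {w beats}

lemma two_mul_sum_mul_sum_filter_le_sq (hw : ∀ i, 0 ≤ w i)
    (hasymm : ∀ i k, beats i k → ¬ beats k i) (T : Finset ι) :
    2 * ∑ k ∈ T, w k * ∑ i ∈ T.filter (beats · k), w i ≤ (∑ k ∈ T, w k) ^ 2 := by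
  have hwins : ∀ k, w k * ∑ i ∈ T.filter (beats · k), w i
      = ∑ i ∈ T, if beats i k then w k * w i else 0 := fun k => by
    rw [sum_filter, mul_sum]
    exact sum_congr rfl fun i _ => by split_ifs <;> simp
  have hpair : ∀ k i, ((if beats i k then w k * w i else 0) + if beats k i then w i * w k else 0)
      ≤ w k * w i := fun k i => by
    have := mul_nonneg (hw k) (hw i)
    by_cases h : beats i k
    · simp [h, hasymm i k h]
    · split_ifs <;> linarith [mul_comm (w i) (w k)]
  calc 2 * ∑ k ∈ T, w k * ∑ i ∈ T.filter (beats · k), w i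
      = ∑ k ∈ T, ∑ i ∈ T, ((if beats i k then w k * w i else 0)
          + if beats k i then w i * w k else 0) := by
        simp only [hwins, sum_add_distrib]
        rw [two_mul, sum_comm (f := fun k i => if beats k i then w i * w k else 0)]
    _ ≤ ∑ k ∈ T, ∑ i ∈ T, w k * w i := sum_le_sum fun k _ => sum_le_sum fun i _ => hpair k i
    _ = (∑ k ∈ T, w k) ^ 2 := by rw [sq, sum_mul_sum]

variable [Fintype ι]

lemma sum_filter_isStrange_le (hw : ∀ i, 0 ≤ w i) (hasymm : ∀ i k, beats i k → ¬ beats k i)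
    {α : ℝ} (hα : 0 ≤ α) :
    ∑ k ∈ univ.filter (IsStrange w beats α), w k ≤ 2 * α * ∑ i, w i := by
  classical
  set T := univ.filter (IsStrange w beats α)
  set s := ∑ k ∈ T, w k
  set D := ∑ i, w i
  have hs : 0 ≤ s := sum_nonneg fun i _ => hw i
  have hsD : s ≤ D := sum_le_univ_sum_of_nonneg hw
  have hstrange : ∀ k ∈ T, (1 - α) * D ≤ ∑ i ∈ T.filter (beats · k), w i + (D - s) := by
    intro k hk
    have hout : ∑ i ∈ Tᶜ.filter (beats · k), w i ≤ D - s := by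
      have hcompl : ∑ i ∈ Tᶜ, w i + s = D := sum_compl_add_sum T w
      have := sum_le_sum_of_subset_of_nonneg (filter_subset (beats · k) Tᶜ) fun i _ _ => hw i
      linarith
    have hsplit : ∑ i ∈ univ.filter (beats · k), w i
        = ∑ i ∈ T.filter (beats · k), w i + ∑ i ∈ Tᶜ.filter (beats · k), w i := by
      simp only [sum_filter, sum_add_sum_compl]
    have hk' : (1 - α) * D ≤ ∑ i ∈ univ.filter (beats · k), w i := (mem_filter.mp hk).2
    linarith
  have hsum : s * ((1 - α) * D)
      ≤ ∑ k ∈ T, w k * ∑ i ∈ T.filter (beats · k), w i + s * (D - s) := by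
    rw [sum_mul, sum_mul, ← sum_add_distrib]
    exact sum_le_sum fun k hk => by
      rw [← mul_add]; exact mul_le_mul_of_nonneg_left (hstrange k hk) (hw k)
  have hsq := two_mul_sum_mul_sum_filter_le_sq hw hasymm T
  -- together: `s (1 - α) D ≤ s² / 2 + s (D - s)`, i.e. `s ≤ 2 α D` once `s > 0`
  rcases hs.eq_or_lt with h0 | hpos
  · rw [← h0]; exact mul_nonneg (by linarith) (hs.trans hsD)
  · nlinarith

lemma sum_ofReal_filter_isStrange_le (hw : ∀ i, 0 ≤ w i)
    (hasymm : ∀ i k, beats i k → ¬ beats k i) {α : ℝ} (hα : 0 ≤ α) :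
    ∑ k ∈ univ.filter (IsStrange w beats α), ENNReal.ofReal (w k)
      ≤ ENNReal.ofReal (2 * α) * ∑ k, ENNReal.ofReal (w k) := by
  rw [← ENNReal.ofReal_sum_of_nonneg fun k _ => hw k,
    ← ENNReal.ofReal_sum_of_nonneg fun k _ => hw k, ← ENNReal.ofReal_mul (by positivity)]
  exact ENNReal.ofReal_le_ofReal (sum_filter_isStrange_le hw hasymm hα)

lemma isStrange_comp_perm (σ : Equiv.Perm ι) {α : ℝ} {k : ι} :
    IsStrange (w ∘ σ) (fun i j => beats (σ i) (σ j)) α k ↔ IsStrange w beats α (σ k) := by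
  simp only [IsStrange, sum_filter, Function.comp_apply]
  rw [Equiv.sum_comp σ w, Equiv.sum_comp σ (fun i => if beats i (σ k) then w i else 0)]

end Tournament

section LeaveTwoOut

variable {X β : Type*} {N : ℕ}

def PermInvariant (A : ∀ m, (Fin m → X) → β) : Prop :=
  ∀ m (σ : Equiv.Perm (Fin m)) (data : Fin m → X), A m (data ∘ σ) = A m data

def fitOn (A : ∀ m, (Fin m → X) → β) (ζ : Fin N → X) (s : Finset (Fin N)) : β :=
  A #s (ζ ∘ s.orderEmbOfFin rfl)

variable {A : ∀ m, (Fin m → X) → β}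

lemma PermInvariant.fitOn_eq (hA : PermInvariant A) (ζ : Fin N → X) {m : ℕ}
    {e : Fin m → Fin N} (he : Function.Injective e) {s : Finset (Fin N)}
    (hs : Set.range e = s) : fitOn A ζ s = A m (ζ ∘ e) := by
  have hcard : #s = m := by
    rw [show s = univ.image e from coe_injective (by simp [hs]),
      card_image_of_injective _ he, card_univ, Fintype.card_fin]
  subst hcard
  have hmem : ∀ k, e k ∈ Set.range (s.orderEmbOfFin rfl) := fun k => by
    rw [range_orderEmbOfFin, ← hs]
    exact ⟨k, rfl⟩
  choose τ hτ using hmem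
  have hτinj : Function.Injective τ := fun a b hab => he (by rw [← hτ a, ← hτ b, hab])
  rw [fitOn, ← hA _ (Equiv.ofBijective τ (Finite.injective_iff_bijective.mp hτinj))]
  congr 1
  funext k
  simp [hτ]

lemma PermInvariant.fitOn_comp_perm (hA : PermInvariant A) (ζ : Fin N → X)
    (σ : Equiv.Perm (Fin N)) {s t : Finset (Fin N)} (hst : ∀ i, σ i ∈ t ↔ i ∈ s) :
    fitOn A (ζ ∘ σ) s = fitOn A ζ t :=
  (hA.fitOn_eq ζ (σ.injective.comp (s.orderEmbOfFin rfl).injective) <| by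
    ext k
    obtain ⟨i, rfl⟩ := σ.surjective k
    simp [Set.range_comp, hst]).symm

end LeaveTwoOut

section PairResidual

variable {X : Type*} {N : ℕ} (A : ∀ m, (Fin m → X × ℝ) → X → ℝ)

noncomputable def pairResid (ζ : Fin N → X × ℝ) (i j : Fin N) : ℝ :=
  |(ζ i).2 - fitOn A ζ {i, j}ᶜ (ζ i).1|

def strangeSet (w : X → ℝ) (α : ℝ) (k : Fin N) : Set (Fin N → X × ℝ) :=
  {ζ | IsStrange (fun i => w (ζ i).1) (fun i j => pairResid A ζ i j < pairResid A ζ j i) α k}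

lemma sum_indicator_strangeSet_le {w : X → ℝ} (hw : ∀ x, 0 ≤ w x) {α : ℝ} (hα : 0 ≤ α)
    (ζ : Fin N → X × ℝ) :
    ∑ k, (strangeSet A w α k).indicator (fun ζ => ENNReal.ofReal (w (ζ k).1)) ζ
      ≤ ENNReal.ofReal (2 * α) * ∑ k, ENNReal.ofReal (w (ζ k).1) := by
  refine le_of_eq_of_le ?_ (sum_ofReal_filter_isStrange_le (fun i => hw (ζ i).1)
    (beats := fun i j => pairResid A ζ i j < pairResid A ζ j i) (fun i j h => h.not_gt) hα)
  rw [sum_filter]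
  rfl

variable {A}

lemma PermInvariant.pairResid_comp_perm (hA : PermInvariant A) (ζ : Fin N → X × ℝ)
    (σ : Equiv.Perm (Fin N)) (i j : Fin N) :
    pairResid A (ζ ∘ σ) i j = pairResid A ζ (σ i) (σ j) := by
  rw [pairResid, hA.fitOn_comp_perm ζ σ (t := {σ i, σ j}ᶜ) (by simp)]
  rfl

lemma PermInvariant.comp_perm_mem_strangeSet (hA : PermInvariant A) (w : X → ℝ) (α : ℝ)
    (σ : Equiv.Perm (Fin N)) (k : Fin N) (ζ : Fin N → X × ℝ) :
    ζ ∘ σ ∈ strangeSet A w α k ↔ ζ ∈ strangeSet A w α (σ k) := by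
  simp only [strangeSet, Set.mem_ofPred_eq, hA.pairResid_comp_perm]
  exact isStrange_comp_perm (w := fun i => w (ζ i).1)
    (beats := fun i j => pairResid A ζ i j < pairResid A ζ j i) σ

variable [MeasurableSpace X]

lemma measurable_fitOn_apply
    (hmeas : ∀ m, Measurable fun q : (Fin m → X × ℝ) × X => A m q.1 q.2) (s : Finset (Fin N))
    (i : Fin N) :
    Measurable fun ζ : Fin N → X × ℝ => fitOn A ζ s (ζ i).1 :=
  (hmeas #s).comp (f := fun ζ : Fin N → X × ℝ => (ζ ∘ s.orderEmbOfFin rfl, (ζ i).1))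
    (by fun_prop)

lemma measurableSet_strangeSet
    (hmeas : ∀ m, Measurable fun q : (Fin m → X × ℝ) × X => A m q.1 q.2) {w : X → ℝ}
    (hw : Measurable w) (α : ℝ) (k : Fin N) :
    MeasurableSet (strangeSet A w α k) := by
  have hwi : ∀ i, Measurable fun ζ : Fin N → X × ℝ => w (ζ i).1 := fun i => by fun_prop
  have hres : ∀ i j, Measurable fun ζ : Fin N → X × ℝ => pairResid A ζ i j := fun i j =>
    ((measurable_pi_apply i).snd.sub (measurable_fitOn_apply hmeas _ i)).abs
  simp only [strangeSet, IsStrange, sum_filter]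
  exact measurableSet_le ((Finset.measurable_sum _ fun i _ => hwi i).const_mul _)
    (Finset.measurable_sum _ fun i _ =>
      Measurable.ite (measurableSet_lt (hres i k) (hres k i)) (hwi i) measurable_const)

end PairResidual

section JAW

variable {d n : ℕ} {𝒜 : FittingAlg d}

lemma PermInvariant.looModel_eq_fitOn (hA : PermInvariant 𝒜)
    (train : Fin (n + 1) → (Fin d → ℝ) × ℝ) (z : (Fin d → ℝ) × ℝ) (i : Fin (n + 1)) :
    looModel 𝒜 train i = fitOn 𝒜 (Fin.snoc train z) {i.castSucc, Fin.last (n + 1)}ᶜ := by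
  have hrange : Set.range (Fin.castSucc ∘ i.succAbove) =
      ↑({i.castSucc, Fin.last (n + 1)}ᶜ : Finset (Fin (n + 2))) := by
    ext k
    induction k using Fin.lastCases with
    | last => simp [Fin.castSucc_ne_last]
    | cast k => simp
  rw [hA.fitOn_eq _ (Fin.castSucc_injective _ |>.comp Fin.succAbove_right_injective) hrange]
  exact congrArg (𝒜 n) (funext fun j => by simp)

lemma PermInvariant.snoc_mem_strangeSet_last (hA : PermInvariant 𝒜) {w : (Fin d → ℝ) → ℝ}
    (hw : ∀ x, 0 ≤ w x) {α : ℝ} (train : Fin (n + 1) → (Fin d → ℝ) × ℝ)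
    (z : (Fin d → ℝ) × ℝ) (hz : 0 < w z.1)
    (hmiss : ¬ (weightedLowerQuantile (fun i => looModel 𝒜 train i z.1 - looResid 𝒜 train i)
          (nlrWeight w train z.1) (nlrWeightTest w train z.1) α ≤ (z.2 : EReal)
        ∧ (z.2 : EReal) ≤ weightedUpperQuantile
          (fun i => looModel 𝒜 train i z.1 + looResid 𝒜 train i)
          (nlrWeight w train z.1) (1 - α))) :
    Fin.snoc train z ∈ strangeSet 𝒜 w α (Fin.last (n + 1)) := by
  have hresTrain : ∀ i, pairResid 𝒜 (Fin.snoc train z) i.castSucc (Fin.last (n + 1))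
      = looResid 𝒜 train i := fun i => by
    simp [pairResid, looResid, hA.looModel_eq_fitOn train z]
  have hresTest : ∀ i, pairResid 𝒜 (Fin.snoc train z) (Fin.last (n + 1)) i.castSucc
      = |z.2 - looModel 𝒜 train i z.1| := fun i => by
    simp [pairResid, hA.looModel_eq_fitOn train z, pair_comm]
  have h := le_sum_filter_of_not_mem_jaw (fun i => looModel 𝒜 train i z.1) (looResid 𝒜 train)
    (fun i => w (train i).1) (fun i => hw _) hz hmiss
  simp only [strangeSet, Set.mem_ofPred_eq, IsStrange, sum_filter]
  rw [Fin.sum_univ_castSucc (n := n + 1), Fin.sum_univ_castSucc (n := n + 1)]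
  simpa only [Fin.snoc_castSucc, Fin.snoc_last, hresTrain, hresTest, lt_irrefl, if_false,
    add_zero, sum_filter] using h

end JAW

section Exchangeability

variable {Ω : Type*} [MeasurableSpace Ω]

lemma ofReal_one_sub_le_of_measure_compl_le {μ : Measure Ω} [IsProbabilityMeasure μ]
    {s : Set Ω} {ε : ℝ} (hε : 0 ≤ ε) (h : μ sᶜ ≤ ENNReal.ofReal ε) :
    ENNReal.ofReal (1 - ε) ≤ μ s := by
  rw [ENNReal.ofReal_sub _ hε, ENNReal.ofReal_one, tsub_le_iff_right, ← measure_univ (μ := μ)]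
  exact (measure_univ_le_add_compl s).trans (by gcongr)

lemma compProd_withDensity_left {Ω' : Type*} [MeasurableSpace Ω'] (μ : Measure Ω) [SFinite μ]
    (κ : Kernel Ω Ω') [IsSFiniteKernel κ] {ρ : Ω → ℝ≥0∞} (hρ : Measurable ρ) :
    (μ.withDensity ρ) ⊗ₘ κ = (μ ⊗ₘ κ).withDensity (fun z => ρ z.1) := by
  refine Measure.ext_of_lintegral _ fun φ hφ => ?_
  rw [Measure.lintegral_compProd hφ, lintegral_withDensity_eq_lintegral_mul _ hρ
      hφ.lintegral_kernel_prod_right', lintegral_withDensity_eq_lintegral_mul _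
      (f := fun z : Ω × Ω' => ρ z.1) (by fun_prop) hφ]
  simp only [Pi.mul_apply]
  rw [Measure.lintegral_compProd (f := fun z => ρ z.1 * φ z) (by fun_prop)]
  exact lintegral_congr fun x => (lintegral_const_mul _ (hφ.comp measurable_prodMk_left)).symm

lemma measurePreserving_snoc {m : ℕ} (ν : Measure Ω) [SigmaFinite ν] :
    MeasurePreserving (fun ω : (Fin m → Ω) × Ω => (Fin.snoc ω.1 ω.2 : Fin (m + 1) → Ω))
      ((Measure.pi fun _ => ν).prod ν) (Measure.pi fun _ => ν) := by
  convert (measurePreserving_piFinSuccAbove (fun _ : Fin (m + 1) => ν) (Fin.last m)).symm.comp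
    (Measure.measurePreserving_swap (μ := Measure.pi fun _ : Fin m => ν) (ν := ν)) using 1
  funext ω
  simp [Fin.snocEquiv]

lemma prod_withDensity_preimage_snoc {m : ℕ} (ν : Measure Ω) [SigmaFinite ν] {ρ : Ω → ℝ≥0∞}
    (hρ : Measurable ρ) {S : Set (Fin (m + 1) → Ω)} (hS : MeasurableSet S) :
    ((Measure.pi fun _ : Fin m => ν).prod (ν.withDensity ρ))
        ((fun ω => Fin.snoc ω.1 ω.2) ⁻¹' S)
      = ∫⁻ ζ in S, ρ (ζ (Fin.last m)) ∂(Measure.pi fun _ => ν) := by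
  have hsnoc := measurePreserving_snoc (m := m) ν
  rw [prod_withDensity_right hρ, withDensity_apply _ (hsnoc.measurable hS)]
  simpa using hsnoc.setLIntegral_comp_preimage (f := fun ζ => ρ (ζ (Fin.last m))) hS
    (hρ.comp (measurable_pi_apply _))

variable {ι : Type*} [Fintype ι]

lemma measurePreserving_comp_perm (ν : Measure Ω) [SigmaFinite ν] (σ : Equiv.Perm ι) :
    MeasurePreserving (fun ζ : ι → Ω => ζ ∘ σ) (Measure.pi fun _ => ν)
      (Measure.pi fun _ => ν) :=
  (measurePreserving_piCongrLeft (fun _ : ι => ν) σ).symm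

variable [DecidableEq ι]

lemma setLIntegral_eval_eq_of_perm (ν : Measure Ω) [SigmaFinite ν] {ρ : Ω → ℝ≥0∞}
    (hρ : Measurable ρ) {S : ι → Set (ι → Ω)} (hS : ∀ k, MeasurableSet (S k))
    (hperm : ∀ (σ : Equiv.Perm ι) k ζ, ζ ∘ σ ∈ S k ↔ ζ ∈ S (σ k)) (j k : ι) :
    ∫⁻ ζ in S j, ρ (ζ j) ∂(Measure.pi fun _ => ν)
      = ∫⁻ ζ in S k, ρ (ζ k) ∂(Measure.pi fun _ => ν) := by
  have hpre : (fun ζ : ι → Ω => ζ ∘ Equiv.swap j k) ⁻¹' S k = S j := by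
    ext ζ
    simp [hperm]
  simpa [hpre] using (measurePreserving_comp_perm ν (Equiv.swap j k)).setLIntegral_comp_preimage
    (f := fun ζ => ρ (ζ k)) (hS k) (hρ.comp (measurable_pi_apply k))

lemma setLIntegral_eval_le_of_perm (ν : Measure Ω) [IsProbabilityMeasure ν] {ρ : Ω → ℝ≥0∞}
    (hρ : Measurable ρ) (hρ1 : ∫⁻ x, ρ x ∂ν = 1) {S : ι → Set (ι → Ω)}
    (hS : ∀ k, MeasurableSet (S k))
    (hperm : ∀ (σ : Equiv.Perm ι) k ζ, ζ ∘ σ ∈ S k ↔ ζ ∈ S (σ k)) {c : ℝ≥0∞}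
    (hc : ∀ ζ, ∑ k, (S k).indicator (fun ζ => ρ (ζ k)) ζ ≤ c * ∑ k, ρ (ζ k)) (k₀ : ι) :
    ∫⁻ ζ in S k₀, ρ (ζ k₀) ∂(Measure.pi fun _ => ν) ≤ c := by
  set P := Measure.pi fun _ : ι => ν
  have hN : (Fintype.card ι : ℝ≥0∞) ≠ 0 := by
    simpa using (Fintype.card_pos_iff.mpr ⟨k₀⟩).ne'
  have hmarked : ∀ k, Measurable ((S k).indicator fun ζ : ι → Ω => ρ (ζ k)) := fun k =>
    (hρ.comp (measurable_pi_apply k)).indicator (hS k)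
  refine (ENNReal.mul_le_mul_iff_right hN (ENNReal.natCast_ne_top _)).mp ?_
  calc (Fintype.card ι : ℝ≥0∞) * ∫⁻ ζ in S k₀, ρ (ζ k₀) ∂P
      = ∑ k, ∫⁻ ζ in S k, ρ (ζ k) ∂P := by
        rw [sum_congr rfl fun k _ => (setLIntegral_eval_eq_of_perm ν hρ hS hperm k₀ k).symm,
          sum_const, card_univ, nsmul_eq_mul]
    _ = ∫⁻ ζ, ∑ k, (S k).indicator (fun ζ => ρ (ζ k)) ζ ∂P := by
        rw [lintegral_finsetSum _ fun k _ => hmarked k]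
        simp_rw [lintegral_indicator (hS _)]
    _ ≤ ∫⁻ ζ, c * ∑ k, ρ (ζ k) ∂P := lintegral_mono hc
    _ = c * ∑ k, ∫⁻ ζ, ρ (ζ k) ∂P := by
        rw [lintegral_const_mul _ (by fun_prop), lintegral_finsetSum _ (by fun_prop)]
    _ = (Fintype.card ι : ℝ≥0∞) * c := by
        have heval : ∀ k, ∫⁻ ζ, ρ (ζ k) ∂P = 1 := fun k =>
          ((measurePreserving_eval (fun _ => ν) k).lintegral_comp hρ).trans hρ1
        simp [heval, mul_comm]

end Exchangeability

instance {d n : ℕ} (PX PtX : Measure (Fin d → ℝ)) [IsProbabilityMeasure PX]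
    [IsProbabilityMeasure PtX] (K : Kernel (Fin d → ℝ) ℝ) [IsMarkovKernel K] :
    IsProbabilityMeasure (jointLaw (n := n) PX PtX K) := by
  unfold jointLaw; infer_instance

/-- **Theorem 1 (JAW coverage under covariate shift).**
In the covariate shift setting — training points `(Xᵢ,Yᵢ)`, `i = 1,…,n+1`, i.i.d. with
`Xᵢ ~ P_X`, `Yᵢ | Xᵢ ~ P_{Y|X}`, and an independent test point with `X ~ P̃_X`,
`Y | X ~ P_{Y|X}` — if `P̃_X` is absolutely continuous with respect to `P_X` with
likelihood ratio `w` (i.e. `P̃_X = w · P_X`) and the model-fitting algorithm `𝒜` is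
symmetric (and measurable), then for every `α ∈ (0,1)` the JAW prediction interval
satisfies `ℙ{Y_test ∈ Ĉ^JAW_α(X_test)} = ℙ{Q⁻_α ≤ Y_test ≤ Q⁺_{1-α}} ≥ 1 - 2α`, the
probability being over the joint draw of the training points and the test point. -/
theorem jaw_coverage (d n : ℕ)
    (PX PtX : Measure (Fin d → ℝ)) [IsProbabilityMeasure PX] [IsProbabilityMeasure PtX]
    (K : Kernel (Fin d → ℝ) ℝ) [IsMarkovKernel K]
    (w : (Fin d → ℝ) → ℝ) (hwMeas : Measurable w) (hwNonneg : ∀ x, 0 ≤ w x)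
    (hac : PtX = PX.withDensity fun x => ENNReal.ofReal (w x))
    (𝒜 : FittingAlg d)
    (hsymm : ∀ (m : ℕ) (σ : Equiv.Perm (Fin m)) (data : Fin m → (Fin d → ℝ) × ℝ),
      𝒜 m (data ∘ σ) = 𝒜 m data)
    (hmeas : ∀ m : ℕ,
      Measurable fun q : (Fin m → (Fin d → ℝ) × ℝ) × (Fin d → ℝ) => 𝒜 m q.1 q.2)
    (α : ℝ) (hα : α ∈ Set.Ioo (0 : ℝ) 1) :
    ENNReal.ofReal (1 - 2 * α) ≤
      (jointLaw PX PtX K)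
        {ω : (Fin (n + 1) → (Fin d → ℝ) × ℝ) × ((Fin d → ℝ) × ℝ) |
          weightedLowerQuantile (fun i => looModel 𝒜 ω.1 i ω.2.1 - looResid 𝒜 ω.1 i)
              (nlrWeight w ω.1 ω.2.1) (nlrWeightTest w ω.1 ω.2.1) α
            ≤ (ω.2.2 : EReal)
          ∧ (ω.2.2 : EReal) ≤
              weightedUpperQuantile
                (fun i => looModel 𝒜 ω.1 i ω.2.1 + looResid 𝒜 ω.1 i)
                (nlrWeight w ω.1 ω.2.1) (1 - α)} := by
  have hA : PermInvariant 𝒜 := hsymm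
  set μ := jointLaw (n := n) PX PtX K with hμ
  set ρ : (Fin d → ℝ) × ℝ → ℝ≥0∞ := fun z => ENNReal.ofReal (w z.1)
  have hρ : Measurable ρ := (hwMeas.comp measurable_fst).ennreal_ofReal
  have hPt : PtX ⊗ₘ K = (PX ⊗ₘ K).withDensity ρ := by
    rw [hac]; exact compProd_withDensity_left PX K hwMeas.ennreal_ofReal
  have hρ1 : ∫⁻ z, ρ z ∂(PX ⊗ₘ K) = 1 := by
    rw [← setLIntegral_univ, ← withDensity_apply _ .univ, ← hPt, measure_univ]
  have hS := measurableSet_strangeSet (N := n + 2) hmeas hwMeas α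
  set strange : Set ((Fin (n + 1) → (Fin d → ℝ) × ℝ) × ((Fin d → ℝ) × ℝ)) :=
    (fun ω => Fin.snoc ω.1 ω.2) ⁻¹' strangeSet 𝒜 w α (Fin.last (n + 1))
  have hnull : μ {ω | ρ ω.2 = 0} = 0 := by
    rw [hμ, jointLaw, hPt, prod_withDensity_right hρ, withDensity_apply_eq_zero (by fun_prop)]
    exact measure_mono_null (fun ω h => h.1 h.2) measure_empty
  have hstrange : μ strange ≤ ENNReal.ofReal (2 * α) := by
    rw [hμ, jointLaw, hPt, prod_withDensity_preimage_snoc _ hρ (hS _)]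
    exact setLIntegral_eval_le_of_perm _ hρ hρ1 hS (hA.comp_perm_mem_strangeSet w α)
      (sum_indicator_strangeSet_le 𝒜 hwNonneg hα.1.le) _
  refine ofReal_one_sub_le_of_measure_compl_le (by linarith [hα.1]) ?_
  calc μ _ ≤ μ ({ω | ρ ω.2 = 0} ∪ strange) :=
        measure_mono fun ω hmiss => or_iff_not_imp_left.mpr fun hρ0 =>
          hA.snoc_mem_strangeSet_last hwNonneg ω.1 ω.2 (by simpa [ρ] using hρ0) hmiss
    _ ≤ ENNReal.ofReal (2 * α) := by
        grw [measure_union_le, hnull, zero_add, hstrange]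
end

section
/- For any α ∈ [0,1], any asymmetric relation B on ι = {1,…,n+1}, and any nonnegative weights p summing to 1, the total weight of strange points satisfies Σ_{i ∈ S} p i ≤ 2α. -/
/-!
Let `w` be the total weight of the strange points `S`. Each strange point `i` beats a weight of
at least `1 - α`, so the pairs `(i, j)` with `i ∈ S` and `B i j`, weighted by `p i * p j`, carry at
least `(1 - α) w`. Asymmetry lets at most one of `(i, j)`, `(j, i)` count, so the pairs inside `S`
carry at most `w² / 2`, and those leaving `S` at most `w (1 - w)`. Hence
`(1 - α) w ≤ w - w² / 2`, i.e. `w ≤ 2α` when `w > 0`.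
-/

open Finset

section AsymmetricRelation

variable {ι : Type*} {B : ι → ι → Prop} [DecidableRel B] {p : ι → ℝ}

theorem sum_mul_sum_filter_le_sq_div_two_of_asymm (hB : ∀ i j, B i j → ¬ B j i) (S : Finset ι)
    (hp : ∀ i ∈ S, 0 ≤ p i) :
    ∑ i ∈ S, p i * ∑ j ∈ S with B i j, p j ≤ (∑ i ∈ S, p i) ^ 2 / 2 := by
  set f : ι → ι → ℝ := fun i j => if B i j then p i * p j else 0
  have hf : ∑ i ∈ S, p i * ∑ j ∈ S with B i j, p j = ∑ i ∈ S, ∑ j ∈ S, f i j := by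
    simp only [f, mul_sum, sum_filter, mul_ite, mul_zero]
  have hpair : ∀ i ∈ S, ∀ j ∈ S, f i j + f j i ≤ p i * p j := by
    intro i hi j hj
    have := mul_nonneg (hp i hi) (hp j hj)
    by_cases hij : B i j
    · simp [f, hij, hB i j hij]
    · by_cases hji : B j i <;> simp [f, hij, hji, mul_comm, this]
  calc ∑ i ∈ S, p i * ∑ j ∈ S with B i j, p j
      = (∑ i ∈ S, ∑ j ∈ S, (f i j + f j i)) / 2 := by
        simp only [sum_add_distrib]
        rw [sum_comm (f := fun i j => f j i), hf]
        ring
    _ ≤ (∑ i ∈ S, ∑ j ∈ S, p i * p j) / 2 := by gcongr with i hi j hj; exact hpair i hi j hj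
    _ = (∑ i ∈ S, p i) ^ 2 / 2 := by rw [sq, sum_mul_sum]

theorem sum_mul_sum_filter_le_of_asymm [Fintype ι] [DecidableEq ι] (hB : ∀ i j, B i j → ¬ B j i)
    (S : Finset ι) (hp : ∀ i, 0 ≤ p i) :
    ∑ i ∈ S, p i * ∑ j with B i j, p j
      ≤ (∑ i ∈ S, p i) ^ 2 / 2 + (∑ i ∈ S, p i) * ∑ j ∈ Sᶜ, p j := by
  have hsplit : ∀ i, ∑ j with B i j, p j = ∑ j ∈ S with B i j, p j + ∑ j ∈ Sᶜ with B i j, p j := by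
    intro i
    simp only [sum_filter]
    exact (sum_add_sum_compl S _).symm
  have hcompl : ∀ i, ∑ j ∈ Sᶜ with B i j, p j ≤ ∑ j ∈ Sᶜ, p j := fun i =>
    sum_le_sum_of_subset_of_nonneg (filter_subset _ _) fun j _ _ => hp j
  calc ∑ i ∈ S, p i * ∑ j with B i j, p j
      = ∑ i ∈ S, p i * ∑ j ∈ S with B i j, p j + ∑ i ∈ S, p i * ∑ j ∈ Sᶜ with B i j, p j := by
        simp only [hsplit, mul_add, sum_add_distrib]
    _ ≤ (∑ i ∈ S, p i) ^ 2 / 2 + ∑ i ∈ S, p i * ∑ j ∈ Sᶜ, p j := by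
        refine add_le_add (sum_mul_sum_filter_le_sq_div_two_of_asymm hB S fun i _ => hp i) ?_
        exact sum_le_sum fun i _ => mul_le_mul_of_nonneg_left (hcompl i) (hp i)
    _ = (∑ i ∈ S, p i) ^ 2 / 2 + (∑ i ∈ S, p i) * ∑ j ∈ Sᶜ, p j := by rw [sum_mul]

end AsymmetricRelation

/-- **Total weight of strange points is at most 2α.**
For any α ∈ [0,1], any asymmetric relation `B` on `ι = Fin (n+1)`, and any nonnegative
weights `p` summing to 1, the set of strange points
`S = {i : 0 < p i ∧ ∑_{j : B i j} p j ≥ 1 - α}` satisfies `∑ i ∈ S, p i ≤ 2α`. -/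
theorem strange_points_total_weight_le (n : ℕ) (α : ℝ) (hα : α ∈ Set.Icc (0 : ℝ) 1)
    (B : Fin (n + 1) → Fin (n + 1) → Prop) [DecidableRel B]
    (hB : ∀ i j, B i j → ¬ B j i)
    (p : Fin (n + 1) → ℝ) (hp : ∀ i, 0 ≤ p i) (hsum : ∑ i, p i = 1) :
    ∑ i ∈ univ.filter
        (fun i => 0 < p i ∧ 1 - α ≤ ∑ j ∈ univ.filter (fun j => B i j), p j), p i
      ≤ 2 * α := by
  set S := univ.filter fun i => 0 < p i ∧ 1 - α ≤ ∑ j ∈ univ.filter (fun j => B i j), p j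
  set w := ∑ i ∈ S, p i
  have hw : 0 ≤ w := sum_nonneg fun i _ => hp i
  have hstrange : (1 - α) * w ≤ ∑ i ∈ S, p i * ∑ j with B i j, p j := by
    rw [mul_sum]
    refine sum_le_sum fun i hi => ?_
    rw [mul_comm]
    exact mul_le_mul_of_nonneg_left (mem_filter.1 hi).2.2 (hp i)
  have hcompl : ∑ j ∈ Sᶜ, p j = 1 - w := by
    rw [← hsum, ← sum_add_sum_compl S p]
    ring
  have hpairs := sum_mul_sum_filter_le_of_asymm hB S hp
  rw [hcompl] at hpairs
  -- `(1 - α) w ≤ w² / 2 + w (1 - w)` means `w (w - 2α) ≤ 0`.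
  nlinarith [hα.1]
end

section
/- For any α ∈ [0,1], any asymmetric relation B on ι = {1,…,n+1}, and any nonnegative weights p summing to 1, if the total weight of strange points s = Σ_{i ∈ S} p i is strictly positive, then s ≤ 2α − (Σ_{i ∈ S} (p i)²)/s. -/
/-!
Let `s` be the weight of `S` and `q = ∑ i ∈ S, p i ^ 2`. The points outside `S` weigh `1 - s`,
so every strange point `i` beats points of `S` of total weight at least `(1 - α) - (1 - s) = s - α`.
Weighting by `p i` and summing over `S` gives `(s - α) s ≤ ∑_{i, j ∈ S, B i j} p i p j`; by asymmetry
each pair of distinct points is counted at most once, so this sum is at most `(s² - q) / 2`.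
Rearranged, `s² + q ≤ 2 α s`.
-/

open Finset

theorem two_mul_sum_sum_filter_mul_le_sq_sub_sum_sq {ι : Type*} [DecidableEq ι]
    (r : ι → ι → Prop) [DecidableRel r] (hr : ∀ i j, r i j → ¬ r j i)
    (s : Finset ι) {p : ι → ℝ} (hp : ∀ i ∈ s, 0 ≤ p i) :
    2 * ∑ i ∈ s, ∑ j ∈ s with r i j, p i * p j ≤ (∑ i ∈ s, p i) ^ 2 - ∑ i ∈ s, p i ^ 2 := by
  have hpair : ∀ i ∈ s, ∀ j ∈ s, (if r i j then p i * p j else 0) + (if r j i then p j * p i else 0)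
      ≤ p i * p j - if i = j then p i * p j else 0 := by
    intro i hi j hj
    by_cases hij : i = j
    · subst hij
      have hirr : ¬ r i i := fun h => hr i i h h
      simp [hirr]
    · by_cases hrij : r i j
      · simp [hij, hrij, hr i j hrij]
      · have hpij := mul_nonneg (hp i hi) (hp j hj)
        split_ifs <;> simp_all [mul_comm]
  calc 2 * ∑ i ∈ s, ∑ j ∈ s with r i j, p i * p j
      = ∑ i ∈ s, ∑ j ∈ s, ((if r i j then p i * p j else 0) + (if r j i then p j * p i else 0)) := by
        simp only [sum_filter, sum_add_distrib, two_mul]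
        rw [sum_comm (f := fun i j => if r j i then p j * p i else 0)]
    _ ≤ ∑ i ∈ s, ∑ j ∈ s, (p i * p j - if i = j then p i * p j else 0) :=
        sum_le_sum fun i hi => sum_le_sum fun j hj => hpair i hi j hj
    _ = (∑ i ∈ s, p i) ^ 2 - ∑ i ∈ s, p i ^ 2 := by
        simp only [sum_sub_distrib, sum_ite_eq, sq, sum_mul_sum]
        simp +contextual

theorem sum_filter_le_sum_filter_add_sum_compl {ι : Type*} [Fintype ι] [DecidableEq ι]
    (P : ι → Prop) [DecidablePred P] (s : Finset ι) {p : ι → ℝ} (hp : ∀ i, 0 ≤ p i) :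
    ∑ j with P j, p j ≤ ∑ j ∈ s with P j, p j + ∑ j ∈ sᶜ, p j := by
  rw [sum_filter, sum_filter, ← sum_add_sum_compl s]
  gcongr with j
  split_ifs
  exacts [le_rfl, hp j]

theorem two_mul_mul_sum_le_sq_sub_sum_sq_of_le_sum_filter {ι : Type*} [DecidableEq ι]
    (r : ι → ι → Prop) [DecidableRel r] (hr : ∀ i j, r i j → ¬ r j i)
    (s : Finset ι) {p : ι → ℝ} (hp : ∀ i ∈ s, 0 ≤ p i) (c : ℝ)
    (hc : ∀ i ∈ s, c ≤ ∑ j ∈ s with r i j, p j) :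
    2 * c * ∑ i ∈ s, p i ≤ (∑ i ∈ s, p i) ^ 2 - ∑ i ∈ s, p i ^ 2 := by
  calc 2 * c * ∑ i ∈ s, p i = 2 * ∑ i ∈ s, p i * c := by rw [← sum_mul]; ring
    _ ≤ 2 * ∑ i ∈ s, ∑ j ∈ s with r i j, p i * p j := by
        simp only [← mul_sum]
        gcongr with i hi
        exacts [hp i hi, hc i hi]
    _ ≤ _ := two_mul_sum_sum_filter_mul_le_sq_sub_sum_sq r hr s hp

theorem strange_points_total_weight_refined_general (n : ℕ) (α : ℝ)
    (B : Fin (n + 1) → Fin (n + 1) → Prop) [DecidableRel B]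
    (hB : ∀ i j, B i j → ¬ B j i)
    (p : Fin (n + 1) → ℝ) (hp : ∀ i, 0 ≤ p i) (hsum : ∑ i, p i = 1)
    (S : Finset (Fin (n + 1)))
    (hS : S = univ.filter
      (fun i => 0 < p i ∧ 1 - α ≤ ∑ j ∈ univ.filter (fun j => B i j), p j))
    (hpos : 0 < ∑ i ∈ S, p i) :
    ∑ i ∈ S, p i ≤ 2 * α - (∑ i ∈ S, (p i) ^ 2) / (∑ i ∈ S, p i) := by
  have hcompl : ∑ j ∈ Sᶜ, p j = 1 - ∑ i ∈ S, p i := by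
    rw [← hsum, ← sum_add_sum_compl S p]; ring
  have hstrange : ∀ i ∈ S, ∑ k ∈ S, p k - α ≤ ∑ j ∈ S with B i j, p j := by
    intro i hi
    have hBi := (mem_filter.mp (hS ▸ hi)).2.2
    have hsplit := sum_filter_le_sum_filter_add_sum_compl (B i) S hp
    linarith
  have key := two_mul_mul_sum_le_sq_sub_sum_sq_of_le_sum_filter B hB S (fun i _ => hp i) _ hstrange
  rw [le_sub_comm, div_le_iff₀ hpos]
  linarith

/-- **Refined bound on the total weight of strange points.**
For any α ∈ [0,1], any asymmetric relation `B` on `ι = Fin (n+1)`, and any nonnegative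
weights `p` summing to 1, if the total weight `s = ∑ i ∈ S, p i` of the strange points
`S = {i : 0 < p i ∧ ∑_{j : B i j} p j ≥ 1 - α}` is strictly positive, then
`s ≤ 2α - (∑ i ∈ S, (p i)²) / s`. -/
theorem strange_points_total_weight_refined (n : ℕ) (α : ℝ) (hα : α ∈ Set.Icc (0 : ℝ) 1)
    (B : Fin (n + 1) → Fin (n + 1) → Prop) [DecidableRel B]
    (hB : ∀ i j, B i j → ¬ B j i)
    (p : Fin (n + 1) → ℝ) (hp : ∀ i, 0 ≤ p i) (hsum : ∑ i, p i = 1)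
    (S : Finset (Fin (n + 1)))
    (hS : S = univ.filter
      (fun i => 0 < p i ∧ 1 - α ≤ ∑ j ∈ univ.filter (fun j => B i j), p j))
    (hpos : 0 < ∑ i ∈ S, p i) :
    ∑ i ∈ S, p i ≤ 2 * α - (∑ i ∈ S, (p i) ^ 2) / (∑ i ∈ S, p i) :=
  strange_points_total_weight_refined_general n α B hB p hp hsum S hS hpos
end

section
/- For any α ∈ [0,1], any asymmetric relation B on ι = {1,…,n+1}, and any nonnegative weights p summing to 1, the strange points satisfy the pairing inequality Σ_{i ∈ S} p i · (1/2) Σ_{j ∈ S, j ≠ i} p j ≤ Σ_{i ∈ S} p i (α − p i); equivalently, (1/2)·Σ over ordered pairs (i,j) of distinct strange points of p i · p j is at most Σ_{i ∈ S} p i (α − p i). -/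
/-!
Split the ordered pairs `(i, j)` of distinct strange points according to whether `B i j` holds.
By asymmetry, `(i, j) ↦ (j, i)` maps the pairs with `B i j` into those with `¬ B i j`, so the
left-hand side is at most `∑ i ∈ S, p i * ∑_{j ≠ i, ¬ B i j} p j`. For a strange point `i` the
inner sum is `1 - p i - ∑_{B i j} p j ≤ α - p i`.
-/

open Finset

section PairSums

variable {ι : Type*} [DecidableEq ι] {r : ι → ι → Prop} [DecidableRel r]

theorem sum_erase_eq_sum_filter_add_sum_filter_not {M : Type*} [AddCommMonoid M]
    (hr : ∀ i, ¬ r i i) (s : Finset ι) (w : ι → M) (i : ι) :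
    ∑ j ∈ s.erase i, w j
      = ∑ j ∈ s with r i j, w j + ∑ j ∈ s.erase i with ¬ r i j, w j := by
  rw [← sum_filter_add_sum_filter_not (s.erase i) (r i), filter_erase,
    erase_eq_of_notMem (fun h => hr i (mem_filter.mp h).2)]

variable {R : Type*} [CommSemiring R] [PartialOrder R] [IsOrderedRing R]

theorem sum_mul_sum_filter_le_sum_mul_sum_filter_not (hr : ∀ i j, r i j → ¬ r j i)
    {s : Finset ι} {w : ι → R} (hw : ∀ i ∈ s, 0 ≤ w i) :
    ∑ i ∈ s, w i * ∑ j ∈ s with r i j, w j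
      ≤ ∑ i ∈ s, w i * ∑ j ∈ s.erase i with ¬ r i j, w j := by
  simp only [← filter_ne', filter_filter, mul_sum, sum_filter, mul_ite, mul_zero]
  rw [sum_comm]
  refine sum_le_sum fun i hi => sum_le_sum fun j hj => ?_
  by_cases hji : r j i
  · have hne : j ≠ i := fun h => hr i i (h ▸ hji) (h ▸ hji)
    simp [hji, hne, hr j i hji, mul_comm]
  · simp only [hji, if_false]
    split_ifs
    exacts [mul_nonneg (hw i hi) (hw j hj), le_rfl]

theorem sum_mul_sum_erase_le_two_mul (hr : ∀ i j, r i j → ¬ r j i)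
    {s : Finset ι} {w : ι → R} (hw : ∀ i ∈ s, 0 ≤ w i) :
    ∑ i ∈ s, w i * ∑ j ∈ s.erase i, w j
      ≤ 2 * ∑ i ∈ s, w i * ∑ j ∈ s.erase i with ¬ r i j, w j := by
  simp only [sum_erase_eq_sum_filter_add_sum_filter_not (fun i h => hr i i h h), mul_add,
    sum_add_distrib, two_mul]
  exact add_le_add_left (sum_mul_sum_filter_le_sum_mul_sum_filter_not hr hw) _

end PairSums

theorem strange_points_pairing_inequality_general (n : ℕ) (α : ℝ)
    (B : Fin (n + 1) → Fin (n + 1) → Prop) [DecidableRel B]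
    (hB : ∀ i j, B i j → ¬ B j i)
    (p : Fin (n + 1) → ℝ) (hp : ∀ i, 0 ≤ p i) (hsum : ∑ i, p i = 1)
    (S : Finset (Fin (n + 1)))
    (hS : S = univ.filter
      (fun i => 0 < p i ∧ 1 - α ≤ ∑ j ∈ univ.filter (fun j => B i j), p j)) :
    ∑ i ∈ S, p i * ((1 / 2) * ∑ j ∈ S.erase i, p j) ≤ ∑ i ∈ S, p i * (α - p i) := by
  have hirr : ∀ i, ¬ B i i := fun i h => hB i i h h
  have hnotB_le : ∀ i ∈ S, ∑ j ∈ S.erase i with ¬ B i j, p j ≤ α - p i := by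
    intro i hi
    have hstrange := (mem_filter.mp (hS ▸ hi)).2.2
    have hsplit := sum_erase_eq_sum_filter_add_sum_filter_not hirr univ p i
    rw [sum_erase_eq_sub (mem_univ i), hsum] at hsplit
    have hsub : ∑ j ∈ S.erase i with ¬ B i j, p j ≤ ∑ j ∈ univ.erase i with ¬ B i j, p j :=
      sum_le_sum_of_subset_of_nonneg (by gcongr; exact subset_univ S) fun j _ _ => hp j
    linarith
  calc ∑ i ∈ S, p i * ((1 / 2) * ∑ j ∈ S.erase i, p j)
      = (1 / 2) * ∑ i ∈ S, p i * ∑ j ∈ S.erase i, p j := by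
        rw [mul_sum]; exact sum_congr rfl fun _ _ => by ring
    _ ≤ ∑ i ∈ S, p i * ∑ j ∈ S.erase i with ¬ B i j, p j := by
        linarith [sum_mul_sum_erase_le_two_mul hB (s := S) (fun i _ => hp i)]
    _ ≤ ∑ i ∈ S, p i * (α - p i) :=
        sum_le_sum fun i hi => mul_le_mul_of_nonneg_left (hnotB_le i hi) (hp i)

/-- **Pairing inequality for strange points.**
For any α ∈ [0,1], any asymmetric relation `B` on `ι = Fin (n+1)`, and any nonnegative
weights `p` summing to 1, the set of strange points
`S = {i : 0 < p i ∧ ∑_{j : B i j} p j ≥ 1 - α}` satisfies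
`∑ i ∈ S, p i * ((1/2) * ∑_{j ∈ S, j ≠ i} p j) ≤ ∑ i ∈ S, p i * (α - p i)`. -/
theorem strange_points_pairing_inequality (n : ℕ) (α : ℝ) (hα : α ∈ Set.Icc (0 : ℝ) 1)
    (B : Fin (n + 1) → Fin (n + 1) → Prop) [DecidableRel B]
    (hB : ∀ i j, B i j → ¬ B j i)
    (p : Fin (n + 1) → ℝ) (hp : ∀ i, 0 ≤ p i) (hsum : ∑ i, p i = 1)
    (S : Finset (Fin (n + 1)))
    (hS : S = univ.filter
      (fun i => 0 < p i ∧ 1 - α ≤ ∑ j ∈ univ.filter (fun j => B i j), p j)) :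
    ∑ i ∈ S, p i * ((1 / 2) * ∑ j ∈ S.erase i, p j) ≤ ∑ i ∈ S, p i * (α - p i) :=
  strange_points_pairing_inequality_general n α B hB p hp hsum S hS
end

section
/- Let B be an asymmetric relation (B i j implies ¬ B j i) on a finite set of N elements and let α ∈ [0,1]. Then the number of elements i that beat at least (1−α)N other elements, i.e., with #{j : B i j} ≥ (1−α)N, is at most 2αN. -/
/-!
Let `S` be the set of strange elements and `k = #S`. A strange element beats at least
`(1 - α)N` elements, of which at most `N - k` lie outside `S`, so it beats at least `k - αN`
elements of `S`. Summing, the number of beating pairs inside `S` is at least `k (k - αN)`;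
by asymmetry it is at most `k (k - 1) / 2`. Hence `k = 0` or `k + 1 ≤ 2αN`.
-/

open Finset

section Asymmetric

variable {α : Type*} (s : Finset α) (r : α → α → Prop) [DecidableRel r]

theorem sum_card_filter_flip_eq :
    ∑ i ∈ s, #{j ∈ s | r j i} = ∑ i ∈ s, #{j ∈ s | r i j} :=
  (sum_card_bipartiteAbove_eq_sum_card_bipartiteBelow r).symm

variable {r}

theorem card_filter_add_card_filter_flip_lt [DecidableEq α] (hr : ∀ a b, r a b → ¬ r b a)
    {i : α} (hi : i ∈ s) :
    #{j ∈ s | r i j} + #{j ∈ s | r j i} < #s := by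
  have hdisj : Disjoint {j ∈ s | r i j} {j ∈ s | r j i} :=
    disjoint_filter.mpr fun j _ hij => hr i j hij
  have hsub : {j ∈ s | r i j ∨ r j i} ⊆ s.erase i := by
    intro j hj
    obtain ⟨hjs, hij⟩ := mem_filter.mp hj
    refine mem_erase.mpr ⟨?_, hjs⟩
    rintro rfl
    have hjj : r j j := hij.elim id id
    exact hr j j hjj hjj
  calc #{j ∈ s | r i j} + #{j ∈ s | r j i}
      = #{j ∈ s | r i j ∨ r j i} := by rw [filter_or, card_union_of_disjoint hdisj]
    _ ≤ #(s.erase i) := card_le_card hsub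
    _ < #s := card_erase_lt_of_mem hi

theorem two_mul_sum_card_filter_add_card_le [DecidableEq α] (hr : ∀ a b, r a b → ¬ r b a) :
    2 * ∑ i ∈ s, #{j ∈ s | r i j} + #s ≤ #s * #s := by
  calc 2 * ∑ i ∈ s, #{j ∈ s | r i j} + #s
      = ∑ i ∈ s, (#{j ∈ s | r i j} + #{j ∈ s | r j i} + 1) := by
        rw [sum_add_distrib, sum_add_distrib, sum_card_filter_flip_eq, sum_const, smul_eq_mul,
          mul_one, two_mul]
    _ ≤ ∑ _i ∈ s, #s := sum_le_sum fun i hi => card_filter_add_card_filter_flip_lt s hr hi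
    _ = #s * #s := by rw [sum_const, smul_eq_mul]

end Asymmetric

theorem card_filter_le_card_filter_add_card_sdiff {α : Type*} [DecidableEq α] (s u : Finset α)
    (p : α → Prop) [DecidablePred p] : #{j ∈ u | p j} ≤ #{j ∈ s | p j} + #(u \ s) := by
  calc #{j ∈ u | p j} ≤ #({j ∈ s | p j} ∪ u \ s) := by
        refine card_le_card fun j hj => ?_
        obtain ⟨hju, hpj⟩ := mem_filter.mp hj
        by_cases hjs : j ∈ s
        · exact mem_union_left _ (mem_filter.mpr ⟨hjs, hpj⟩)
        · exact mem_union_right _ (mem_sdiff.mpr ⟨hju, hjs⟩)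
    _ ≤ #{j ∈ s | p j} + #(u \ s) := card_union_le _ _

theorem tournament_strange_count_le_general (N : ℕ) (α : ℝ) (hα : α ∈ Set.Icc (0 : ℝ) 1)
    (B : Fin N → Fin N → Prop) [DecidableRel B]
    (hB : ∀ i j, B i j → ¬ B j i) :
    ((univ.filter
        (fun i => (1 - α) * N ≤ ((univ.filter (fun j => B i j)).card : ℝ))).card : ℝ)
      ≤ 2 * α * N := by
  set S := univ.filter fun i => (1 - α) * N ≤ ((univ.filter (fun j => B i j)).card : ℝ)
  have hbeats_in_S : ∀ i ∈ S, (#S : ℝ) - α * N ≤ #{j ∈ S | B i j} := by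
    intro i hi
    have hstrange := (mem_filter.mp hi).2
    have hsplit := card_filter_le_card_filter_add_card_sdiff S univ (B i)
    rw [card_univ_sdiff, Fintype.card_fin] at hsplit
    have hkN : #S ≤ N := by simpa using card_le_univ S
    have hsplit_real := (Nat.cast_le (α := ℝ)).mpr hsplit
    push_cast [Nat.cast_sub hkN] at hsplit_real
    linarith
  have hlower : (#S : ℝ) * (#S - α * N) ≤ ∑ i ∈ S, (#{j ∈ S | B i j} : ℝ) := by
    simpa only [sum_const, nsmul_eq_mul] using sum_le_sum hbeats_in_S
  have hupper : 2 * ∑ i ∈ S, (#{j ∈ S | B i j} : ℝ) + #S ≤ #S * #S := by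
    exact_mod_cast two_mul_sum_card_filter_add_card_le S hB
  rcases Nat.eq_zero_or_pos #S with hempty | hnonempty
  · rw [hempty, Nat.cast_zero]
    exact mul_nonneg (mul_nonneg zero_le_two hα.1) N.cast_nonneg
  · have hpos : (0 : ℝ) < #S := by exact_mod_cast hnonempty
    have hsucc : (#S : ℝ) * (#S + 1) ≤ #S * (2 * α * N) := by linarith
    linarith [le_of_mul_le_mul_left hsucc hpos]

/-- **Tournament bound (uniform-weight case).**
Let `B` be an asymmetric relation on a finite set of `N` elements and `α ∈ [0,1]`. Then
the number of elements `i` that beat at least `(1-α)N` other elements, i.e. with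
`#{j : B i j} ≥ (1-α)N`, is at most `2αN`. -/
theorem tournament_strange_count_le (N : ℕ) (hN : 0 < N) (α : ℝ) (hα : α ∈ Set.Icc (0 : ℝ) 1)
    (B : Fin N → Fin N → Prop) [DecidableRel B]
    (hB : ∀ i j, B i j → ¬ B j i) :
    ((univ.filter
        (fun i => (1 - α) * N ≤ ((univ.filter (fun j => B i j)).card : ℝ))).card : ℝ)
      ≤ 2 * α * N :=
  tournament_strange_count_le_general N α hα B hB
end

section
/- Let n ≥ 1, let a_1,…,a_n ∈ ℝ (leave-one-out predictions at the test point), let r_1,…,r_n ≥ 0 (leave-one-out residuals), let p_1,…,p_{n+1} ≥ 0 with Σ_{i=1}^{n+1} p_i = 1, and let α ∈ (0,1). Define Q⁺_{1−α} = inf{t ∈ ℝ : Σ_{i : a_i + r_i ≤ t} p_i ≥ 1−α} and Q⁻_α = inf{t ∈ ℝ : p_{n+1} + Σ_{i : a_i − r_i ≤ t} p_i ≥ α}, both infima taken in the extended real line (equal to +∞ when the defining set is empty). If y ∈ ℝ lies outside the interval [Q⁻_α, Q⁺_{1−α}] (i.e., y < Q⁻_α or y > Q⁺_{1−α}), then Σ_{i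 : |y − a_i| > r_i} p_i ≥ 1 − α. -/
/-!
If `y` lies below the lower quantile, then `y` itself fails the defining inequality, so the
indices with `y < aᵢ - rᵢ` carry weight more than `1 - α`; if `y` lies above the upper quantile,
some `t < y` satisfies it, so the indices with `aᵢ + rᵢ ≤ t < y` carry weight at least `1 - α`.
Either way these indices have `rᵢ < |y - aᵢ|`.
-/

open Finset

theorem Finset.sum_filter_le_sum_filter_of_imp {ι M : Type*} [AddCommMonoid M] [PartialOrder M]
    [IsOrderedAddMonoid M] (s : Finset ι) {f : ι → M} (hf : ∀ i ∈ s, 0 ≤ f i)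
    {P Q : ι → Prop} [DecidablePred P] [DecidablePred Q] (hPQ : ∀ i ∈ s, P i → Q i) :
    ∑ i ∈ s.filter P, f i ≤ ∑ i ∈ s.filter Q, f i :=
  sum_le_sum_of_subset_of_nonneg (fun i hi => by
      rw [mem_filter] at hi ⊢
      exact ⟨hi.1, hPQ i hi.1 hi.2⟩)
    (fun i hi _ => hf i (filter_subset _ _ hi))

theorem EReal.notMem_of_coe_lt_sInf_image_coe {S : Set ℝ} {y : ℝ}
    (hy : (y : EReal) < sInf (Real.toEReal '' S)) : y ∉ S :=
  fun hyS => hy.not_ge (sInf_le ⟨y, hyS, rfl⟩)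

theorem EReal.exists_mem_lt_of_sInf_image_coe_lt {S : Set ℝ} {y : ℝ}
    (hy : sInf (Real.toEReal '' S) < (y : EReal)) : ∃ t ∈ S, t < y := by
  obtain ⟨_, ⟨t, htS, rfl⟩, hty⟩ := sInf_lt_iff.1 hy
  exact ⟨t, htS, EReal.coe_lt_coe_iff.1 hty⟩

theorem jaw_noncoverage_strange_general (n : ℕ) (a r : Fin n → ℝ)
    (p : Fin n → ℝ) (pExtra : ℝ)
    (hp : ∀ i, 0 ≤ p i) (hsum : ∑ i, p i + pExtra = 1)
    (α : ℝ) (y : ℝ)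
    (hy : (y : EReal) < sInf (Real.toEReal ''
            {t : ℝ | α ≤ pExtra + ∑ i ∈ univ.filter (fun i => a i - r i ≤ t), p i})
        ∨ sInf (Real.toEReal ''
            {t : ℝ | 1 - α ≤ ∑ i ∈ univ.filter (fun i => a i + r i ≤ t), p i})
          < (y : EReal)) :
    1 - α ≤ ∑ i ∈ univ.filter (fun i => r i < |y - a i|), p i := by
  rcases hy with hy | hy
  · have hlow := EReal.notMem_of_coe_lt_sInf_image_coe hy
    rw [Set.mem_ofPred_eq, not_le] at hlow
    have hsplit := sum_filter_add_sum_filter_not univ (fun i => a i - r i ≤ y) p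
    calc 1 - α ≤ ∑ i ∈ univ.filter (fun i => ¬a i - r i ≤ y), p i := by linarith
      _ ≤ _ := sum_filter_le_sum_filter_of_imp _ (fun i _ => hp i)
          fun i _ hi => lt_abs.2 (Or.inr (by linarith [not_le.1 hi]))
  · obtain ⟨t, ht, hty⟩ := EReal.exists_mem_lt_of_sInf_image_coe_lt hy
    exact ht.trans (sum_filter_le_sum_filter_of_imp _ (fun i _ => hp i)
      fun i _ hi => lt_abs.2 (Or.inl (by linarith [show a i + r i ≤ t from hi])))

/-- **Noncoverage of the weighted jackknife+ (JAW-type) interval forces strangeness.**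
Let `n ≥ 1`, let `a₁,…,aₙ ∈ ℝ` (leave-one-out predictions at the test point), let
`r₁,…,rₙ ≥ 0` (leave-one-out residuals), let `p₁,…,p_{n+1} ≥ 0` with
`∑_{i=1}^{n+1} pᵢ = 1` (here `pExtra` plays the role of `p_{n+1}`), and let
`α ∈ (0,1)`.  Define `Q⁺_{1-α} = inf {t : ∑_{i : aᵢ + rᵢ ≤ t} pᵢ ≥ 1-α}` and
`Q⁻_α = inf {t : p_{n+1} + ∑_{i : aᵢ - rᵢ ≤ t} pᵢ ≥ α}`, both infima taken in the
extended real line.  If `y ∈ ℝ` lies outside the interval `[Q⁻_α, Q⁺_{1-α}]`, then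
`∑_{i : |y - aᵢ| > rᵢ} pᵢ ≥ 1 - α`. -/
theorem jaw_noncoverage_strange (n : ℕ) (hn : 1 ≤ n) (a r : Fin n → ℝ)
    (hr : ∀ i, 0 ≤ r i) (p : Fin n → ℝ) (pExtra : ℝ)
    (hp : ∀ i, 0 ≤ p i) (hpExtra : 0 ≤ pExtra) (hsum : ∑ i, p i + pExtra = 1)
    (α : ℝ) (hα : α ∈ Set.Ioo (0 : ℝ) 1) (y : ℝ)
    (hy : (y : EReal) < sInf (Real.toEReal ''
            {t : ℝ | α ≤ pExtra + ∑ i ∈ univ.filter (fun i => a i - r i ≤ t), p i})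
        ∨ sInf (Real.toEReal ''
            {t : ℝ | 1 - α ≤ ∑ i ∈ univ.filter (fun i => a i + r i ≤ t), p i})
          < (y : EReal)) :
    1 - α ≤ ∑ i ∈ univ.filter (fun i => r i < |y - a i|), p i :=
  jaw_noncoverage_strange_general n a r p pExtra hp hsum α y hy
end
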